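/- Let λ ≤ μ ≤ ν and λ' ≤ μ' ≤ ν' be two trace-free triples (λ+μ+ν = 0 = λ'+μ'+ν') of real numbers, and s < 0 a real number with s/6 + ν + ν' ≤ 0. If |s|/√6 = √(λ²+μ²+ν²) + √(λ'²+μ'²+ν'²), then μ = ν = √(λ²+μ²+ν²)/√6 and μ' = ν' = √(λ'²+μ'²+ν'²)/√6. -/
import Mathlib

lemma aux_bound (l m n : ℝ) (h1 : l ≤ m) (h2 : m ≤ n) (h3 : l + m + n = 0) :
    Real.sqrt (l^2 + m^2 + n^2) ≤ Real.sqrt 6 * n := by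
  have hn : 0 ≤ n := by linarith
  have hQ : l^2 + m^2 + n^2 ≤ 6 * n^2 := by nlinarith [sq_nonneg (m - n), sq_nonneg (l - n)]
  calc Real.sqrt (l^2 + m^2 + n^2) ≤ Real.sqrt (6 * n^2) := Real.sqrt_le_sqrt hQ
    _ = Real.sqrt 6 * n := by
        rw [Real.sqrt_mul (by norm_num), Real.sqrt_sq hn]

lemma aux_eq (l m n : ℝ) (h1 : l ≤ m) (h2 : m ≤ n) (h3 : l + m + n = 0)
    (heq : Real.sqrt (l^2 + m^2 + n^2) = Real.sqrt 6 * n) :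
    m = n ∧ n = Real.sqrt (l^2 + m^2 + n^2) / Real.sqrt 6 := by
  have hr : (0:ℝ) < Real.sqrt 6 := Real.sqrt_pos.mpr (by norm_num)
  have hr2 : (Real.sqrt 6)^2 = 6 := Real.sq_sqrt (by norm_num)
  have hQn : 0 ≤ l^2 + m^2 + n^2 := by positivity
  have hsq : l^2 + m^2 + n^2 = 6 * n^2 := by
    have := Real.sq_sqrt hQn
    rw [heq] at this
    nlinarith [this]
  have hz : (m - n) * (m + 2*n) = 0 := by nlinarith [hsq]
  have hmn : m = n := by
    rcases mul_eq_zero.mp hz with h | h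
    · linarith
    · -- m + 2n = 0 forces all zero
      have : n = 0 := by nlinarith
      linarith
  refine ⟨hmn, ?_⟩
  rw [heq]
  field_simp

theorem stmt_12 (l m n l' m' n' s : ℝ)
    (h1 : l ≤ m) (h2 : m ≤ n) (h3 : l + m + n = 0)
    (h1' : l' ≤ m') (h2' : m' ≤ n') (h3' : l' + m' + n' = 0)
    (hs : s < 0) (hsec : s/6 + n + n' ≤ 0)
    (heq : |s| / Real.sqrt 6 =
      Real.sqrt (l^2 + m^2 + n^2) + Real.sqrt (l'^2 + m'^2 + n'^2)) :
    (m = n ∧ n = Real.sqrt (l^2 + m^2 + n^2) / Real.sqrt 6) ∧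
    (m' = n' ∧ n' = Real.sqrt (l'^2 + m'^2 + n'^2) / Real.sqrt 6) := by
  have hr : (0:ℝ) < Real.sqrt 6 := Real.sqrt_pos.mpr (by norm_num)
  have hr2 : (Real.sqrt 6)^2 = 6 := Real.sq_sqrt (by norm_num)
  have ha := aux_bound l m n h1 h2 h3
  have hb := aux_bound l' m' n' h1' h2' h3'
  rw [abs_of_neg hs] at heq
  -- -s / √6 = √6 * (-s/6)
  have hkey : -s / Real.sqrt 6 = Real.sqrt 6 * (-s / 6) := by
    field_simp
    nlinarith [hr2]
  have hub : Real.sqrt 6 * (n + n') ≤ Real.sqrt 6 * (-s / 6) :=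
    mul_le_mul_of_nonneg_left (by linarith) hr.le
  have hEa : Real.sqrt (l^2 + m^2 + n^2) = Real.sqrt 6 * n := by
    nlinarith [heq, ha, hb, hub, hkey]
  have hEb : Real.sqrt (l'^2 + m'^2 + n'^2) = Real.sqrt 6 * n' := by
    nlinarith [heq, ha, hb, hub, hkey]
  exact ⟨aux_eq l m n h1 h2 h3 hEa, aux_eq l' m' n' h1' h2' h3' hEb⟩
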